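/- arXiv:1302.5536 — 7 statements merged into one kernel-verified Lean document; each statement's English description precedes it below -/
import Mathlib

section
/- Define τ : ℂ × ℂ → ℝ by τ(z,w) = √(|z-w|·|z-conj(w)|). Then τ is a pseudo-metric on ℂ: it is nonnegative, symmetric, satisfies τ(z,z)=0, and satisfies the triangle inequality τ(z,w) ≤ τ(z,y) + τ(y,w) for all z,y,w ∈ ℂ. -/
/-- The Cassini pseudo-metric on `ℂ`: `τ(z,w) = √(|z-w|·|z-conj w|)`. -/
noncomputable def tau (z w : ℂ) : ℝ :=
  Real.sqrt (‖z - w‖ * ‖z - (starRingEnd ℂ) w‖)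

/-!
The argument only uses that conjugation is an isometric involution. Write
`a² = |z-y|`, `b² = |z-ȳ|`, `c² = |y-w|`, `d² = |y-w̄|`. Routing the triangle inequality through
`y` or through `ȳ` bounds `|z-w|` by `a²+c²` and by `b²+d²`, and `|z-w̄|` by `b²+c²` and by
`a²+d²`; an elementary inequality then gives `|z-w|·|z-w̄| ≤ (ab+cd)²`.
-/

theorem min_mul_min_le_sq {a b c d : ℝ} (ha : 0 ≤ a) (hb : 0 ≤ b) (hc : 0 ≤ c) (hd : 0 ≤ d) :
    min (a ^ 2 + c ^ 2) (b ^ 2 + d ^ 2) * min (b ^ 2 + c ^ 2) (a ^ 2 + d ^ 2) ≤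
      (a * b + c * d) ^ 2 := by
  wlog hle : a ^ 2 + c ^ 2 ≤ b ^ 2 + d ^ 2 generalizing a b c d
  · have := this hb ha hd hc (by linarith)
    rwa [min_comm, min_comm (a ^ 2 + d ^ 2), mul_comm b, mul_comm d] at this
  rw [min_eq_left hle]
  rcases le_total (b * c) (a * d) with hbc | had
  · calc (a ^ 2 + c ^ 2) * min (b ^ 2 + c ^ 2) (a ^ 2 + d ^ 2)
        ≤ (a ^ 2 + c ^ 2) * (b ^ 2 + c ^ 2) := by gcongr; exact min_le_left _ _
      _ ≤ (a * b + c * d) ^ 2 := by nlinarith [mul_le_mul_of_nonneg_left hbc (mul_nonneg hb hc)]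
  · calc (a ^ 2 + c ^ 2) * min (b ^ 2 + c ^ 2) (a ^ 2 + d ^ 2)
        ≤ (a ^ 2 + c ^ 2) * (a ^ 2 + d ^ 2) := by gcongr; exact min_le_right _ _
      _ ≤ (a * b + c * d) ^ 2 := by nlinarith [mul_le_mul_of_nonneg_left had (mul_nonneg ha hd)]

section NormedStarGroup

variable {E : Type*} [SeminormedAddCommGroup E] [StarAddMonoid E] [NormedStarGroup E]

theorem norm_star_sub_eq_norm_sub_star (x y : E) : ‖star x - y‖ = ‖x - star y‖ := by
  rw [← norm_star, star_sub, star_star]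

theorem norm_sub_star_comm (x y : E) : ‖x - star y‖ = ‖y - star x‖ := by
  rw [← norm_star_sub_eq_norm_sub_star, norm_sub_rev]

noncomputable def cassiniDist (z w : E) : ℝ :=
  √(‖z - w‖ * ‖z - star w‖)

theorem cassiniDist_comm (z w : E) : cassiniDist z w = cassiniDist w z := by
  rw [cassiniDist, cassiniDist, norm_sub_rev, norm_sub_star_comm]

theorem cassiniDist_triangle (z y w : E) :
    cassiniDist z w ≤ cassiniDist z y + cassiniDist y w := by
  have h_zw : ‖z - w‖ ≤ min (‖z - y‖ + ‖y - w‖) (‖z - star y‖ + ‖y - star w‖) :=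
    le_min (norm_sub_le_norm_sub_add_norm_sub z y w)
      (norm_star_sub_eq_norm_sub_star y w ▸ norm_sub_le_norm_sub_add_norm_sub z (star y) w)
  have h_zw' : ‖z - star w‖ ≤ min (‖z - star y‖ + ‖y - w‖) (‖z - y‖ + ‖y - star w‖) := by
    refine le_min ?_ (norm_sub_le_norm_sub_add_norm_sub z y (star w))
    simpa only [← star_sub, norm_star] using norm_sub_le_norm_sub_add_norm_sub z (star y) (star w)
  have key := min_mul_min_le_sq (Real.sqrt_nonneg ‖z - y‖) (Real.sqrt_nonneg ‖z - star y‖)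
    (Real.sqrt_nonneg ‖y - w‖) (Real.sqrt_nonneg ‖y - star w‖)
  simp only [Real.sq_sqrt (norm_nonneg _)] at key
  rw [cassiniDist, cassiniDist, cassiniDist, Real.sqrt_mul (norm_nonneg (z - y)),
    Real.sqrt_mul (norm_nonneg (y - w)), Real.sqrt_le_left (by positivity)]
  exact (mul_le_mul h_zw h_zw' (norm_nonneg _) (by positivity)).trans key

end NormedStarGroup

/-- `τ` is a pseudo-metric on `ℂ`: nonnegative, symmetric, vanishing on the
diagonal, and satisfying the triangle inequality. -/
theorem tau_is_pseudometric :
    (∀ z w : ℂ, 0 ≤ tau z w) ∧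
    (∀ z w : ℂ, tau z w = tau w z) ∧
    (∀ z : ℂ, tau z z = 0) ∧
    (∀ z y w : ℂ, tau z w ≤ tau z y + tau y w) := by
  have tau_eq : tau = cassiniDist := rfl
  refine ⟨fun z w => Real.sqrt_nonneg _, ?_, fun z => by simp [tau], ?_⟩
  · exact tau_eq ▸ cassiniDist_comm
  · exact tau_eq ▸ cassiniDist_triangle
end

section
/- For all z, w ∈ ℂ, √(|Δ_w(z)| + (Im w)²) − |Im w| ≤ |z − w| ≤ √(|Δ_w(z)| + (Im w)²) + |Im w|, where Δ_w(z) = (z−w)(z−conj(w)). -/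
/-- The characteristic polynomial `Δ_w(z) = (z-w)(z-conj w)`. -/
noncomputable def Delta (w z : ℂ) : ℂ := (z - w) * (z - (starRingEnd ℂ) w)

/-! With `a = |z - w|` and `b = |z - conj w|` we have `|Δ_w(z)| = a b`, and the triangle inequality
through `w` and `conj w` gives `|a - b| ≤ 2 m` with `m = |Im w|`. Then
`(a + m)² - (a b + m²) = a (a + 2m - b) ≥ 0` and `a b + m² - (a - m)² = a (b - a + 2m) ≥ 0`,
so `a` lies within `m` of `√(a b + m²)`. -/

open ComplexConjugate

theorem abs_sub_sqrt_mul_add_sq_le {a b m : ℝ} (ha : 0 ≤ a) (hab : |a - b| ≤ 2 * m) :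
    |a - √(a * b + m ^ 2)| ≤ m := by
  obtain ⟨hab', hba⟩ := abs_sub_le_iff.mp hab
  have hm : 0 ≤ m := by linarith [abs_nonneg (a - b)]
  rw [abs_sub_le_iff, sub_le_iff_le_add', sub_le_iff_le_add', Real.sqrt_le_left (by positivity)]
  constructor
  · calc a ≤ |a - m| + m := by linarith [le_abs_self (a - m)]
      _ ≤ √(a * b + m ^ 2) + m := by gcongr; exact Real.abs_le_sqrt (by nlinarith)
  · nlinarith

theorem Complex.abs_norm_sub_sub_norm_sub_conj_le (z w : ℂ) :
    |‖z - w‖ - ‖z - conj w‖| ≤ 2 * |w.im| := by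
  simpa only [← dist_eq_norm, dist_comm z, dist_self_conj] using abs_dist_sub_le w (conj w) z

theorem norm_Delta (w z : ℂ) : ‖Delta w z‖ = ‖z - w‖ * ‖z - conj w‖ :=
  norm_mul _ _

/-- For all `z, w ∈ ℂ`,
`√(|Δ_w(z)| + (Im w)²) − |Im w| ≤ |z − w| ≤ √(|Δ_w(z)| + (Im w)²) + |Im w|`. -/
theorem abs_sub_bounds_via_Delta (z w : ℂ) :
    Real.sqrt (‖Delta w z‖ + w.im ^ 2) - |w.im| ≤ ‖z - w‖ ∧
    ‖z - w‖ ≤ Real.sqrt (‖Delta w z‖ + w.im ^ 2) + |w.im| := by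
  have h := abs_sub_sqrt_mul_add_sq_le (norm_nonneg _)
    (Complex.abs_norm_sub_sub_norm_sub_conj_le z w)
  rw [← norm_Delta, sq_abs, abs_sub_le_iff] at h
  constructor <;> linarith [h.1, h.2]
end

section
/- Let w ∈ ℂ \ ℝ. For each n, ℓ ∈ ℕ, the n-th complex derivative of the spherical polynomial S_{w,ℓ} evaluated at w equals n! · e_{2n,ℓ} · (2i·Im w)^{ℓ−n}, where the integers e_{n,ℓ} are defined by: e_{2m,2k} = e_{2m+1,2k} = C(k, m−k), e_{2m,2k+1} = C(k, m−k−1), e_{2m+1,2k+1} = −C(k+1, m−k) (with binomial coefficient C(a,b) = 0 when b < 0 or b > a). -/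
/-- The complex spherical polynomials: `S_{w,2m}(z) = Δ_w(z)^m`,
`S_{w,2m+1}(z) = Δ_w(z)^m (z−w)`. -/
noncomputable def Sph (w : ℂ) (n : ℕ) (z : ℂ) : ℂ :=
  Delta w z ^ (n / 2) * (if n % 2 = 1 then z - w else 1)

/-- The spherical matrix: `e_{2m,2k} = e_{2m+1,2k} = C(k, m−k)`,
`e_{2m,2k+1} = C(k, m−k−1)`, `e_{2m+1,2k+1} = −C(k+1, m−k)`, with the
convention that `C(a,b) = 0` if `b < 0` or `b > a`. -/
def sphE (n l : ℕ) : ℤ :=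
  let m := n / 2
  let k := l / 2
  if n % 2 = 0 then
    if l % 2 = 0 then (if k ≤ m then (Nat.choose k (m - k) : ℤ) else 0)
    else (if k + 1 ≤ m then (Nat.choose k (m - k - 1) : ℤ) else 0)
  else
    if l % 2 = 0 then (if k ≤ m then (Nat.choose k (m - k) : ℤ) else 0)
    else (if k ≤ m then -(Nat.choose (k + 1) (m - k) : ℤ) else 0)


/-! Since `z - conj w = (w - conj w) + (z - w)`, the binomial theorem expands `S_{w,ℓ}` at `w`
as `∑ⱼ C(⌊ℓ/2⌋, j) (w - conj w)ʲ (z - w)^(ℓ - j)`. Its `n`-th derivative at `w` only sees the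
term with `ℓ - j = n`, and `C(⌊ℓ/2⌋, ℓ - n)` is `e_{2n,ℓ}` up to the symmetry of binomial
coefficients. -/

open Finset

theorem iteratedDeriv_sub_pow_self {𝕜 : Type*} [NontriviallyNormedField 𝕜] (n m : ℕ) (a : 𝕜) :
    iteratedDeriv n (fun z => (z - a) ^ m) a = if n = m then (m.factorial : 𝕜) else 0 := by
  rw [congrFun (iteratedDeriv_comp_sub_const n (· ^ m) a) a, sub_self, iteratedDeriv_fun_pow_zero,
    Nat.cast_ite, Nat.cast_zero]

theorem sph_eq_sum (w z : ℂ) (l : ℕ) :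
    Sph w l z = ∑ j ∈ range (l / 2 + 1),
      (l / 2).choose j * (w - (starRingEnd ℂ) w) ^ j * (z - w) ^ (l - j) := by
  have hsplit : z - (starRingEnd ℂ) w = (w - (starRingEnd ℂ) w) + (z - w) := by ring
  rw [Sph, Delta, mul_pow, hsplit, add_pow, mul_sum, sum_mul]
  refine sum_congr rfl fun j hj => ?_
  have hl : l - j = (l / 2 - j) + (l / 2 + l % 2) := by
    have := mem_range.mp hj
    omega
  rw [hl, pow_add]
  rcases Nat.mod_two_eq_zero_or_one l with h | h <;>
    simp only [h, zero_ne_one, ↓reduceIte, mul_one, add_zero] <;> ring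

theorem iteratedDeriv_sph_self (w : ℂ) (n l : ℕ) :
    iteratedDeriv n (Sph w l) w = if n ≤ l then
      n.factorial * (l / 2).choose (l - n) * (w - (starRingEnd ℂ) w) ^ (l - n) else 0 := by
  simp_rw [funext (sph_eq_sum w · l)]
  rw [iteratedDeriv_fun_sum fun j _ => by fun_prop]
  simp_rw [iteratedDeriv_const_mul_field, iteratedDeriv_sub_pow_self]
  split_ifs with hnl
  · rw [sum_eq_single (l - n)]
    · rw [if_pos (by omega), Nat.sub_sub_self hnl]
      ring
    · intro j hj hne
      have := mem_range.mp hj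
      rw [if_neg (by omega), mul_zero]
    · intro h
      rw [Nat.choose_eq_zero_of_lt (by rw [mem_range] at h; omega)]
      simp
  · refine sum_eq_zero fun j _ => ?_
    rw [if_neg (by omega), mul_zero]

theorem Nat.choose_sub_sub_eq_ite {k r l n : ℕ} (hl : 2 * k + r = l) :
    (if k + r ≤ n then k.choose (n - k - r) else 0) = if n ≤ l then k.choose (l - n) else 0 := by
  split_ifs
  · exact Nat.choose_symm_of_eq_add (by omega)
  · exact Nat.choose_eq_zero_of_lt (by omega)
  · exact (Nat.choose_eq_zero_of_lt (by omega)).symm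
  · rfl

theorem sphE_two_mul (n l : ℕ) :
    sphE (2 * n) l = if n ≤ l then ((l / 2).choose (l - n) : ℤ) else 0 := by
  have hE : sphE (2 * n) l =
      if l / 2 + l % 2 ≤ n then ((l / 2).choose (n - l / 2 - l % 2) : ℤ) else 0 := by
    rcases Nat.mod_two_eq_zero_or_one l with h | h <;> simp [sphE, h]
  rw [hE]
  exact_mod_cast Nat.choose_sub_sub_eq_ite (Nat.div_add_mod l 2)

theorem iteratedDeriv_sph_at_w_general (w : ℂ) (n l : ℕ) :
    iteratedDeriv n (Sph w l) w
      = (Nat.factorial n : ℂ) * (sphE (2 * n) l : ℂ)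
          * (2 * Complex.I * (w.im : ℂ)) ^ ((l : ℤ) - (n : ℤ)) := by
  have hδ : w - (starRingEnd ℂ) w = 2 * Complex.I * w.im := by
    rw [Complex.sub_conj]; push_cast; ring
  rw [iteratedDeriv_sph_self, sphE_two_mul, hδ]
  split_ifs with hnl
  · rw [← Nat.cast_sub hnl, zpow_natCast]
    push_cast
    ring
  · simp

/-- For `w ∉ ℝ`, the `n`-th complex derivative of `S_{w,ℓ}` at `w` equals
`n! · e_{2n,ℓ} · (2i·Im w)^{ℓ−n}`. -/
theorem iteratedDeriv_sph_at_w (w : ℂ) (hw : w.im ≠ 0) (n l : ℕ) :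
    iteratedDeriv n (Sph w l) w
      = (Nat.factorial n : ℂ) * (sphE (2 * n) l : ℂ)
          * (2 * Complex.I * (w.im : ℂ)) ^ ((l : ℤ) - (n : ℤ)) :=
  iteratedDeriv_sph_at_w_general w n l
end

section
/- Let w ∈ ℂ \ ℝ. For each n, ℓ ∈ ℕ, the n-th complex derivative of S_{w,ℓ} evaluated at conj(w) equals n! · (−1)^ℓ · e_{2n+1,ℓ} · (−2i·Im w)^{ℓ−n}, where e_{n,ℓ} is the spherical matrix: e_{2m,2k} = e_{2m+1,2k} = C(k, m−k), e_{2m,2k+1} = C(k, m−k−1), e_{2m+1,2k+1} = −C(k+1, m−k). -/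
/-!
Put `c = conj w`. Then `S_{w,ℓ}(z) = (z - c)^⌊ℓ/2⌋ (z - c + (c - w))^⌈ℓ/2⌉`, so the `n`-th
derivative at `c` is `n!` times the `n`-th coefficient of `X^⌊ℓ/2⌋ (X + (c - w))^⌈ℓ/2⌉`, which by
the binomial theorem is `C(⌈ℓ/2⌉, n - ⌊ℓ/2⌋) (c - w)^(ℓ - n)`. This is the claim, because
`c - w = -2i Im w` and `(-1)^ℓ e_{2n+1,ℓ} = C(⌈ℓ/2⌉, n - ⌊ℓ/2⌋)` in both parities of `ℓ`.
-/

open Polynomial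
open scoped Nat

namespace Polynomial

variable {𝕜 : Type*} [NontriviallyNormedField 𝕜]

theorem iteratedDeriv_eval (p : 𝕜[X]) (n : ℕ) :
    iteratedDeriv n (fun x => p.eval x) = fun x => (derivative^[n] p).eval x := by
  induction n with
  | zero => rfl
  | succ n ih =>
    funext x
    rw [iteratedDeriv_succ, ih, Function.iterate_succ_apply']
    exact Polynomial.deriv _

theorem iteratedDeriv_eval_zero (p : 𝕜[X]) (n : ℕ) :
    iteratedDeriv n (fun x => p.eval x) 0 = n ! * p.coeff n := by
  simp only [iteratedDeriv_eval]
  rw [← coeff_zero_eq_eval_zero, coeff_iterate_derivative, zero_add,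
    Nat.descFactorial_self, nsmul_eq_mul]

theorem iteratedDeriv_eval_sub_const_self (p : 𝕜[X]) (c : 𝕜) (n : ℕ) :
    iteratedDeriv n (fun x => p.eval (x - c)) c = n ! * p.coeff n := by
  simp only [iteratedDeriv_comp_sub_const (f := fun x => p.eval x), sub_self]
  exact iteratedDeriv_eval_zero p n

theorem coeff_X_pow_mul_X_add_C_pow {K : Type*} [Field K] (d : K) (a b n : ℕ) :
    (X ^ a * (X + C d) ^ b).coeff n
      = (if a ≤ n then (b.choose (n - a) : K) else 0) * d ^ ((a + b : ℤ) - n) := by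
  rw [coeff_X_pow_mul', coeff_X_add_C_pow]
  split_ifs with han
  · rcases le_or_gt (n - a) b with hb | hb
    · have hexp : (a + b : ℤ) - n = (b - (n - a) : ℕ) := by omega
      rw [hexp, zpow_natCast, mul_comm]
    · simp [Nat.choose_eq_zero_of_lt hb]
  · rw [zero_mul]

end Polynomial

theorem Sph_eq_eval_sub_conj (w : ℂ) (l : ℕ) :
    Sph w l = fun z =>
      (X ^ (l / 2) * (X + C (starRingEnd ℂ w - w)) ^ ((l + 1) / 2)).eval (z - starRingEnd ℂ w) := by
  funext z
  simp only [Sph, Delta, eval_mul, eval_pow, eval_add, eval_X, eval_C, sub_add_sub_cancel, mul_pow]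
  obtain ⟨k, rfl | rfl⟩ := Nat.even_or_odd' l
  · rw [show 2 * k / 2 = k by omega, show (2 * k + 1) / 2 = k by omega, if_neg (by omega)]
    ring
  · rw [show (2 * k + 1) / 2 = k by omega, show (2 * k + 1 + 1) / 2 = k + 1 by omega,
      if_pos (by omega)]
    ring

theorem neg_one_pow_mul_sphE_two_mul_add_one (n l : ℕ) :
    (-1) ^ l * sphE (2 * n + 1) l
      = if l / 2 ≤ n then (((l + 1) / 2).choose (n - l / 2) : ℤ) else 0 := by
  have hn : (2 * n + 1) / 2 = n := by omega
  obtain ⟨k, rfl | rfl⟩ := Nat.even_or_odd' l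
  · have hk : 2 * k / 2 = k := by omega
    have hk' : (2 * k + 1) / 2 = k := by omega
    simp [sphE, hn, hk, hk', pow_mul]
  · have hk : (2 * k + 1) / 2 = k := by omega
    have hk' : (2 * k + 1 + 1) / 2 = k + 1 := by omega
    simp [sphE, hn, hk, hk', Nat.add_mod, pow_succ, pow_mul]

theorem iteratedDeriv_sph_at_conj_general (w : ℂ) (n l : ℕ) :
    iteratedDeriv n (Sph w l) ((starRingEnd ℂ) w)
      = (Nat.factorial n : ℂ) * (-1 : ℂ) ^ l * (sphE (2 * n + 1) l : ℂ)
          * (-(2 * Complex.I * (w.im : ℂ))) ^ ((l : ℤ) - (n : ℤ)) := by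
  have hgap : -(2 * Complex.I * (w.im : ℂ)) = starRingEnd ℂ w - w := by
    rw [← neg_sub, Complex.sub_conj]; push_cast; ring
  have hsign : (-1 : ℂ) ^ l * (sphE (2 * n + 1) l : ℂ)
      = if l / 2 ≤ n then (((l + 1) / 2).choose (n - l / 2) : ℂ) else 0 := by
    exact_mod_cast congrArg (Int.cast : ℤ → ℂ) (neg_one_pow_mul_sphE_two_mul_add_one n l)
  have hl : ((l / 2 : ℕ) : ℤ) + ((l + 1) / 2 : ℕ) = l := by omega
  rw [Sph_eq_eval_sub_conj, iteratedDeriv_eval_sub_const_self, coeff_X_pow_mul_X_add_C_pow,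
    hl, mul_assoc (n ! : ℂ), hsign, hgap, mul_assoc]

/-- For `w ∉ ℝ`, the `n`-th complex derivative of `S_{w,ℓ}` at `conj w` equals
`n! · (−1)^ℓ · e_{2n+1,ℓ} · (−2i·Im w)^{ℓ−n}`. -/
theorem iteratedDeriv_sph_at_conj (w : ℂ) (hw : w.im ≠ 0) (n l : ℕ) :
    iteratedDeriv n (Sph w l) ((starRingEnd ℂ) w)
      = (Nat.factorial n : ℂ) * (-1 : ℂ) ^ l * (sphE (2 * n + 1) l : ℂ)
          * (-(2 * Complex.I * (w.im : ℂ))) ^ ((l : ℤ) - (n : ℤ)) :=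
  iteratedDeriv_sph_at_conj_general w n l
end

section
/- Let w ∈ ℂ \ ℝ and suppose the complex spherical series S(z) = Σ_{n∈ℕ} S_{w,n}(z) s_n (with s_n ∈ ℂ) converges on a Cassini ball U(w,R) = {z : |Δ_w(z)| < R²} with R > 0, defining a holomorphic function S there. Then for each n ∈ ℕ, (1/n!) · S⁽ⁿ⁾(w) = (2i·Im w)^{−n} · Σ_{ℓ=n}^{2n} e_{2n,ℓ} (2i·Im w)^ℓ s_ℓ. -/
/-!
Put `z = w + u` and `d = w - conj w = 2i·Im w`. Then `Δ_w(w + u) = u (u + d)`, so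
`S_{w,l}(w + u) = u^⌈l/2⌉ (u + d)^⌊l/2⌋` is a polynomial in `u` whose coefficient of `u^n` is
`e_{2n,l} d^(l-n)` and vanishes unless `n ≤ l ≤ 2n`. The terms of the series are bounded at a
point `w + x` with `x > 0` small, which bounds `|s_l|` by a multiple of `|S_{w,l}(w + x)|⁻¹`; this
makes the double series `Σ_{l,k} [u^k] S_{w,l} · u^k s_l` absolutely convergent for `|u| < x/16`.
Summing it by powers of `u` exhibits `S` as a power series around `w`, whose `n`-th coefficient
`S⁽ⁿ⁾(w)/n!` is the finite sum `Σ_{l=n}^{2n} e_{2n,l} d^(l-n) s_l`.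
-/

open Polynomial Finset Topology

noncomputable section

theorem Polynomial.hasSum_coeff_mul_pow {R : Type*} [Semiring R] [TopologicalSpace R] (p : R[X])
    (x : R) : HasSum (fun k => p.coeff k * x ^ k) (p.eval x) := by
  rw [eval_eq_sum, Polynomial.sum_def]
  exact hasSum_sum_of_ne_finset_zero fun k hk => by rw [notMem_support_iff.mp hk, zero_mul]

theorem hasSum_tsum_coeff_mul_pow {𝕜 : Type*} [NormedField 𝕜] [CompleteSpace 𝕜] {P : ℕ → 𝕜[X]}
    {s : ℕ → 𝕜} {u T : 𝕜}
    (hP : Summable fun q : ℕ × ℕ => (P q.1).coeff q.2 * u ^ q.2 * s q.1)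
    (hT : HasSum (fun l => (P l).eval u * s l) T) :
    HasSum (fun k => (∑' l, (P l).coeff k * s l) * u ^ k) T := by
  have hrows := hP.hasSum.prod_fiberwise fun l => ((P l).hasSum_coeff_mul_pow u).mul_right (s l)
  rw [hT.unique hrows]
  refine ((Equiv.prodComm ℕ ℕ).hasSum_iff.mpr hP.hasSum).prod_fiberwise fun k => ?_
  have hcol := (hP.prod_symm.prod_factor k).hasSum
  simp only [Function.comp_def, Equiv.prodComm_apply, Prod.fst_swap, Prod.snd_swap] at hcol ⊢
  have hcol_sum : (∑' l, (P l).coeff k * s l) * u ^ k = ∑' l, (P l).coeff k * u ^ k * s l := by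
    rw [← tsum_mul_right]
    exact tsum_congr fun l => by ring
  rwa [hcol_sum]

theorem iteratedDeriv_eq_factorial_mul_of_hasSum {f : ℂ → ℂ} {w : ℂ} {r : ℝ} (hr : 0 < r)
    {b : ℕ → ℂ} (hf : ∀ u : ℂ, ‖u‖ < r → HasSum (fun k => b k * u ^ k) (f (w + u))) (n : ℕ) :
    iteratedDeriv n f w = n.factorial * b n := by
  set p := FormalMultilinearSeries.ofScalars ℂ b
  set r' : NNReal := (r / 2).toNNReal
  have hr' : (r' : ℝ) = r / 2 := Real.coe_toNNReal _ (by positivity)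
  have hr2 : ‖((r / 2 : ℝ) : ℂ)‖ < r := by
    rw [Complex.norm_real, Real.norm_of_nonneg (by positivity)]; linarith
  obtain ⟨C, hC⟩ := (hf _ hr2).summable.tendsto_atTop_zero.norm.bddAbove_range
  have hrad : (r' : ENNReal) ≤ p.radius :=
    p.le_radius_of_bound C fun k => by
      simpa [p, FormalMultilinearSeries.ofScalars_norm, hr', abs_of_pos hr] using
        hC (Set.mem_range_self k)
  have hball : HasFPowerSeriesOnBall f p w r' := by
    refine ⟨hrad, by simpa [r'] using hr, fun {y} hy => ?_⟩
    have hy : ‖y‖ < r / 2 := by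
      simpa [← hr'] using hy
    simpa [p, FormalMultilinearSeries.ofScalars_apply_eq, mul_comm] using hf y (by linarith)
  have hcoeff := hball.factorial_smul 1 n
  rw [iteratedFDeriv_apply_eq_iteratedDeriv_mul_prod] at hcoeff
  simpa [p] using hcoeff.symm

section SphPoly

variable {R : Type*}

def sphPoly [Semiring R] (d : R) (l : ℕ) : R[X] := X ^ ((l + 1) / 2) * (X + C d) ^ (l / 2)

theorem coeff_sphPoly [Semiring R] (d : R) (l k : ℕ) :
    (sphPoly d l).coeff k =
      if (l + 1) / 2 ≤ k then d ^ (l / 2 - (k - (l + 1) / 2)) * (l / 2).choose (k - (l + 1) / 2)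
      else 0 := by
  rw [sphPoly, coeff_X_pow_mul', coeff_X_add_C_pow]

theorem coeff_sphPoly_eq_zero [Semiring R] (d : R) {l k : ℕ} (h : l ∉ Icc k (2 * k)) :
    (sphPoly d l).coeff k = 0 := by
  rw [coeff_sphPoly]
  split_ifs
  · rw [Nat.choose_eq_zero_of_lt (by simp only [mem_Icc] at h; omega), Nat.cast_zero, mul_zero]
  · rfl

theorem coeff_sphPoly_eq_sphE [Ring R] (d : R) {n l : ℕ} (h : l ∈ Icc n (2 * n)) :
    (sphPoly d l).coeff n = sphE (2 * n) l * d ^ (l - n) := by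
  rw [mem_Icc] at h
  rw [coeff_sphPoly, if_pos (by omega), ← Int.cast_natCast, (Int.cast_commute _ _).eq]
  obtain ⟨k, rfl | rfl⟩ := Nat.even_or_odd' l
  · rw [show (2 * k + 1) / 2 = k by omega, show 2 * k - n = k - (n - k) by omega]
    simp [sphE, show k ≤ n by omega]
  · have hk : (2 * k + 1) / 2 = k := by omega
    rw [show (2 * k + 1 + 1) / 2 = k + 1 by omega, show 2 * k + 1 - n = k - (n - (k + 1)) by omega]
    simp [sphE, hk, show k < n by omega, Nat.sub_sub]

theorem Sph_add_eq_eval_sphPoly (w u : ℂ) (l : ℕ) :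
    Sph w l (w + u) = (sphPoly (w - starRingEnd ℂ w) l).eval u := by
  have hΔ : Delta w (w + u) = u * (u + (w - starRingEnd ℂ w)) := by rw [Delta]; ring
  obtain ⟨k, rfl | rfl⟩ := Nat.even_or_odd' l
  · simp [Sph, sphPoly, hΔ, mul_pow, show (2 * k + 1) / 2 = k by omega]
  · simp only [Sph, sphPoly, hΔ, Nat.mul_add_mod_self_left, Nat.one_mod, if_true,
      add_sub_cancel_left, mul_pow, eval_mul, eval_pow, eval_X, eval_add, eval_C,
      show (2 * k + 1) / 2 = k by omega, show (2 * k + 1 + 1) / 2 = k + 1 by omega]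
    ring

theorem norm_coeff_sphPoly {𝕜 : Type*} [RCLike 𝕜] (d : 𝕜) (l k : ℕ) :
    ‖(sphPoly d l).coeff k‖ = (sphPoly ‖d‖ l).coeff k := by
  simp only [coeff_sphPoly]
  split_ifs <;> simp

theorem sum_coeff_sphPoly_mul [Field R] {d : R} (hd : d ≠ 0) (s : ℕ → R) (n : ℕ) :
    ∑ l ∈ Icc n (2 * n), (sphPoly d l).coeff n * s l
      = d ^ (-(n : ℤ)) * ∑ l ∈ Icc n (2 * n), (sphE (2 * n) l : R) * d ^ l * s l := by
  rw [mul_sum]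
  refine sum_congr rfl fun l hl => ?_
  rw [coeff_sphPoly_eq_sphE d hl, zpow_neg, zpow_natCast, pow_sub₀ d hd (mem_Icc.mp hl).1]
  ring

end SphPoly

theorem norm_eval_sphPoly_ofReal_ge (d : ℂ) {x : ℝ} (hx : 0 ≤ x) (hxd : x ≤ ‖d‖ / 2) (l : ℕ) :
    x ^ ((l + 1) / 2) * (‖d‖ / 2) ^ (l / 2) ≤ ‖(sphPoly d l).eval (x : ℂ)‖ := by
  have hxd' : ‖d‖ / 2 ≤ ‖(x : ℂ) + d‖ := by
    have htri := norm_sub_le ((x : ℂ) + d) x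
    rw [add_sub_cancel_left, Complex.norm_real, Real.norm_of_nonneg hx] at htri
    linarith
  simp only [sphPoly, eval_mul, eval_pow, eval_X, eval_C, eval_add, norm_mul, norm_pow,
    Complex.norm_real, Real.norm_of_nonneg hx]
  gcongr

theorem eval_sphPoly_norm_le (d : ℂ) {ρ x : ℝ} (hρ : 0 ≤ ρ) (hρx : 16 * ρ ≤ x)
    (hxd : x ≤ ‖d‖ / 2) (l : ℕ) :
    (sphPoly ‖d‖ l).eval ρ ≤ (1 / 2) ^ l * ‖(sphPoly d l).eval (x : ℂ)‖ := by
  have hx : 0 ≤ x := by linarith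
  have hgeom : (1 / 16 : ℝ) ^ ((l + 1) / 2) * 4 ^ (l / 2) ≤ (1 / 2) ^ l :=
    calc (1 / 16 : ℝ) ^ ((l + 1) / 2) * 4 ^ (l / 2)
        ≤ (1 / 16) ^ ((l + 1) / 2) * 4 ^ ((l + 1) / 2) := by gcongr <;> norm_num
      _ = (1 / 2) ^ (2 * ((l + 1) / 2)) := by rw [← mul_pow, pow_mul]; norm_num
      _ ≤ (1 / 2) ^ l := pow_le_pow_of_le_one (by norm_num) (by norm_num) (by omega)
  calc (sphPoly ‖d‖ l).eval ρ = ρ ^ ((l + 1) / 2) * (ρ + ‖d‖) ^ (l / 2) := by simp [sphPoly]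
    _ ≤ (x / 16) ^ ((l + 1) / 2) * (4 * (‖d‖ / 2)) ^ (l / 2) := by
        gcongr <;> linarith
    _ = ((1 / 16) ^ ((l + 1) / 2) * 4 ^ (l / 2)) * (x ^ ((l + 1) / 2) * (‖d‖ / 2) ^ (l / 2)) := by
        rw [div_eq_mul_one_div x, mul_pow, mul_pow]; ring
    _ ≤ (1 / 2) ^ l * ‖(sphPoly d l).eval (x : ℂ)‖ :=
        mul_le_mul hgeom (norm_eval_sphPoly_ofReal_ge d hx hxd l) (by positivity)
          (by positivity)

theorem summable_coeff_sphPoly_mul_pow_mul (d : ℂ) {s : ℕ → ℂ} {x C : ℝ} {u : ℂ}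
    (hxd : x ≤ ‖d‖ / 2) (hs : ∀ l, ‖(sphPoly d l).eval (x : ℂ) * s l‖ ≤ C) (hu : 16 * ‖u‖ ≤ x) :
    Summable fun q : ℕ × ℕ => (sphPoly d q.1).coeff q.2 * u ^ q.2 * s q.1 := by
  have hrow : ∀ l, HasSum (fun k => ‖(sphPoly d l).coeff k * u ^ k * s l‖)
      ((sphPoly ‖d‖ l).eval ‖u‖ * ‖s l‖) := fun l => by
    simpa [norm_coeff_sphPoly] using ((sphPoly ‖d‖ l).hasSum_coeff_mul_pow ‖u‖).mul_right ‖s l‖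
  have hbound : ∀ l, (sphPoly ‖d‖ l).eval ‖u‖ * ‖s l‖ ≤ C * (1 / 2) ^ l := fun l =>
    calc (sphPoly ‖d‖ l).eval ‖u‖ * ‖s l‖
        ≤ (1 / 2) ^ l * ‖(sphPoly d l).eval (x : ℂ)‖ * ‖s l‖ := by
          gcongr; exact eval_sphPoly_norm_le d (norm_nonneg u) hu hxd l
      _ ≤ C * (1 / 2) ^ l := by
          rw [mul_assoc, ← norm_mul, mul_comm C]; gcongr; exact hs l
  refine Summable.of_norm ((summable_prod_of_nonneg fun _ => norm_nonneg _).mpr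
    ⟨fun l => (hrow l).summable, ?_⟩)
  refine Summable.of_nonneg_of_le (fun l => tsum_nonneg fun _ => norm_nonneg _) (fun l => ?_)
    (summable_geometric_two.mul_left C)
  rw [(hrow l).tsum_eq]
  exact hbound l

theorem exists_hasSum_taylor_of_hasSum_Sph {w : ℂ} (hw : w.im ≠ 0) {U : Set ℂ} (hU : U ∈ 𝓝 w)
    {s : ℕ → ℂ} {f : ℂ → ℂ} (hf : ∀ z ∈ U, HasSum (fun l => Sph w l z * s l) (f z)) :
    ∃ r > 0, ∀ u : ℂ, ‖u‖ < r → HasSum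
      (fun k => (∑' l, (sphPoly (w - starRingEnd ℂ w) l).coeff k * s l) * u ^ k) (f (w + u)) := by
  set d := w - starRingEnd ℂ w
  have hd : 0 < ‖d‖ := norm_pos_iff.mpr (by simp [d, Complex.sub_conj, hw])
  obtain ⟨ε, hε, hball⟩ := Metric.mem_nhds_iff.mp hU
  have hmem : ∀ u : ℂ, ‖u‖ < ε → w + u ∈ U := fun u hu => hball (by simpa using hu)
  set x := min (ε / 2) (‖d‖ / 2)
  have hx : 0 < x := by positivity
  have hxε : x < ε := (min_le_left _ _).trans_lt (by linarith)
  obtain ⟨C, hC⟩ : BddAbove (Set.range fun l => ‖(sphPoly d l).eval (x : ℂ) * s l‖) := by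
    simpa [Sph_add_eq_eval_sphPoly] using
      (hf _ (hmem x (by simpa [abs_of_pos hx]))).summable.tendsto_atTop_zero.norm.bddAbove_range
  refine ⟨x / 16, by positivity, fun u hu => hasSum_tsum_coeff_mul_pow ?_ ?_⟩
  · exact summable_coeff_sphPoly_mul_pow_mul d (min_le_right _ _)
      (fun l => hC (Set.mem_range_self l)) (by linarith)
  · simpa [Sph_add_eq_eval_sphPoly] using hf _ (hmem u (by linarith))

theorem spherical_series_deriv_general (w : ℂ) (hw : w.im ≠ 0) (R : ℝ) (hR : 0 < R)
    (s : ℕ → ℂ) (SF : ℂ → ℂ)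
    (hconv : ∀ z : ℂ, ‖Delta w z‖ < R ^ 2 →
      HasSum (fun n => Sph w n z * s n) (SF z))
    (n : ℕ) :
    (1 / (Nat.factorial n : ℂ)) * iteratedDeriv n SF w
      = (2 * Complex.I * (w.im : ℂ)) ^ (-(n : ℤ))
          * ∑ l ∈ Finset.Icc n (2 * n),
              (sphE (2 * n) l : ℂ) * (2 * Complex.I * (w.im : ℂ)) ^ l * s l := by
  have hcassini : {z : ℂ | ‖Delta w z‖ < R ^ 2} ∈ 𝓝 w :=
    (isOpen_lt (by unfold Delta; fun_prop) continuous_const).mem_nhds (by simpa [Delta] using pow_pos hR 2)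
  obtain ⟨r, hr, htaylor⟩ := exists_hasSum_taylor_of_hasSum_Sph hw hcassini hconv
  have hd : 2 * Complex.I * (w.im : ℂ) = w - starRingEnd ℂ w := by
    rw [Complex.sub_conj]; push_cast; ring
  have hd0 : w - starRingEnd ℂ w ≠ 0 := by rw [← hd]; simp [hw]
  rw [iteratedDeriv_eq_factorial_mul_of_hasSum hr htaylor,
    tsum_eq_sum fun l hl => by rw [coeff_sphPoly_eq_zero _ hl, zero_mul],
    sum_coeff_sphPoly_mul hd0, hd, ← mul_assoc,
    one_div_mul_cancel (Nat.cast_ne_zero.mpr n.factorial_ne_zero), one_mul]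

/-- If `w ∉ ℝ` and the spherical series `Σₙ S_{w,n}(z)·sₙ` converges on the
Cassini ball `{z : |Δ_w(z)| < R²}` (with `R > 0`) to a holomorphic function
`SF`, then for each `n`,
`(1/n!)·SF⁽ⁿ⁾(w) = (2i·Im w)^{−n} · Σ_{ℓ=n}^{2n} e_{2n,ℓ}·(2i·Im w)^ℓ·s_ℓ`. -/
theorem spherical_series_deriv (w : ℂ) (hw : w.im ≠ 0) (R : ℝ) (hR : 0 < R)
    (s : ℕ → ℂ) (SF : ℂ → ℂ)
    (hconv : ∀ z : ℂ, ‖Delta w z‖ < R ^ 2 →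
      HasSum (fun n => Sph w n z * s n) (SF z))
    (hdiff : DifferentiableOn ℂ SF {z : ℂ | ‖Delta w z‖ < R ^ 2})
    (n : ℕ) :
    (1 / (Nat.factorial n : ℂ)) * iteratedDeriv n SF w
      = (2 * Complex.I * (w.im : ℂ)) ^ (-(n : ℤ))
          * ∑ l ∈ Finset.Icc n (2 * n),
              (sphE (2 * n) l : ℂ) * (2 * Complex.I * (w.im : ℂ)) ^ l * s l :=
  spherical_series_deriv_general w hw R hR s SF hconv n
end
end

section
/- Let {aₙ} be a sequence in ℂ, w ∈ ℂ, and let R ∈ (0,∞] be defined by limsup ‖aₙ‖^{1/n} = 1/R. Then the spherical series Σₙ S_{w,n}(z) aₙ converges absolutely and uniformly on compact subsets of the Cassini ball U(w,R) = {z ∈ ℂ : |Δ_w(z)| < R²}, and diverges at every z with |Δ_w(z)| > R². -/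
open Filter Finset

open FormalMultilinearSeries
open scoped NNReal ENNReal Topology

theorem radius_ofScalars_eq_of_limsup {𝕜 E : Type*} [NontriviallyNormedField 𝕜]
    [NormedRing E] [NormedAlgebra 𝕜 E] [NormOneClass E] {a : ℕ → 𝕜} {R : ℝ≥0∞}
    (h : limsup (fun n : ℕ => (‖a n‖₊ : ℝ≥0∞) ^ ((n : ℝ)⁻¹)) atTop = R⁻¹) :
    (ofScalars E a).radius = R := by
  rw [← inv_inj, radius_inv_eq_limsup, ← h]
  congr! 2 with n
  rw [ENNReal.coe_rpow_of_nonneg _ (by positivity), one_div]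
  congr 2
  ext
  exact ofScalars_norm E a n

theorem tendsto_zero_of_tendsto_sum_range {G : Type*} [AddCommGroup G] [TopologicalSpace G]
    [IsTopologicalAddGroup G] {f : ℕ → G} {l : G}
    (h : Tendsto (fun N => ∑ n ∈ range N, f n) atTop (𝓝 l)) : Tendsto f atTop (𝓝 0) := by
  have := (h.comp (tendsto_add_atTop_nat 1)).sub h
  simpa [Function.comp_def, sum_range_succ] using this

theorem pow_mod_two_le_max (x : ℝ) (n : ℕ) : x ^ (n % 2) ≤ max 1 x := by
  rcases Nat.mod_two_eq_zero_or_one n with h | h <;> simp [h]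

theorem min_le_pow_mod_two (x : ℝ) (n : ℕ) : min 1 x ≤ x ^ (n % 2) := by
  rcases Nat.mod_two_eq_zero_or_one n with h | h <;> simp [h]

theorem pow_eq_sq_pow_div_two_mul_pow_mod_two {M : Type*} [Monoid M] (x : M) (n : ℕ) :
    x ^ n = (x ^ 2) ^ (n / 2) * x ^ (n % 2) := by
  rw [← pow_mul, ← pow_add, Nat.div_add_mod]

theorem norm_sph (w z : ℂ) (n : ℕ) :
    ‖Sph w n z‖ = ‖Delta w z‖ ^ (n / 2) * ‖z - w‖ ^ (n % 2) := by
  rcases Nat.mod_two_eq_zero_or_one n with h | h <;> simp [Sph, h]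

theorem norm_sph_le {w z : ℂ} {ρ : ℝ} (hρ : 0 < ρ) (hΔ : ‖Delta w z‖ ≤ ρ ^ 2) (n : ℕ) :
    ‖Sph w n z‖ ≤ max 1 (‖z - w‖ / ρ) * ρ ^ n := by
  calc ‖Sph w n z‖ = ‖Delta w z‖ ^ (n / 2) * ((‖z - w‖ / ρ) ^ (n % 2) * ρ ^ (n % 2)) := by
        rw [norm_sph, ← mul_pow, div_mul_cancel₀ _ hρ.ne']
    _ ≤ (ρ ^ 2) ^ (n / 2) * (max 1 (‖z - w‖ / ρ) * ρ ^ (n % 2)) := by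
        gcongr
        exact pow_mod_two_le_max _ n
    _ = max 1 (‖z - w‖ / ρ) * ρ ^ n := by
        rw [pow_eq_sq_pow_div_two_mul_pow_mod_two ρ n]; ring

theorem le_norm_sph {w z : ℂ} {ρ : ℝ} (hρ : 0 < ρ) (hΔ : ρ ^ 2 ≤ ‖Delta w z‖) (n : ℕ) :
    min 1 (‖z - w‖ / ρ) * ρ ^ n ≤ ‖Sph w n z‖ := by
  calc min 1 (‖z - w‖ / ρ) * ρ ^ n
        = (ρ ^ 2) ^ (n / 2) * (min 1 (‖z - w‖ / ρ) * ρ ^ (n % 2)) := by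
        rw [pow_eq_sq_pow_div_two_mul_pow_mod_two ρ n]; ring
    _ ≤ ‖Delta w z‖ ^ (n / 2) * ((‖z - w‖ / ρ) ^ (n % 2) * ρ ^ (n % 2)) := by
        gcongr
        exact min_le_pow_mod_two _ n
    _ = ‖Sph w n z‖ := by
        rw [norm_sph, ← mul_pow, div_mul_cancel₀ _ hρ.ne']

theorem exists_nnreal_lt_and_lt_sq {t : ℝ} {R : ℝ≥0∞} (h : ENNReal.ofReal t < R ^ 2) :
    ∃ ρ : ℝ≥0, 0 < ρ ∧ (ρ : ℝ≥0∞) < R ∧ t < ρ ^ 2 := by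
  obtain ⟨r, htr, hrR⟩ := ENNReal.lt_iff_exists_nnreal_btwn.mp h
  have hr : 0 < r := ENNReal.coe_pos.mp (bot_le.trans_lt htr)
  refine ⟨NNReal.sqrt r, NNReal.sqrt_pos.mpr hr, ?_, ?_⟩
  · rwa [← ENNReal.pow_lt_pow_left_iff two_ne_zero, ← ENNReal.coe_pow, NNReal.sq_sqrt]
  · rw [← NNReal.coe_pow, NNReal.sq_sqrt]
    rw [← ENNReal.ofReal_coe_nnreal] at htr
    exact (ENNReal.ofReal_lt_ofReal_iff'.mp htr).1

theorem exists_nnreal_gt_and_sq_lt {t : ℝ} {R : ℝ≥0∞} (h : R ^ 2 < ENNReal.ofReal t) :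
    ∃ ρ : ℝ≥0, R < ρ ∧ (ρ : ℝ) ^ 2 < t := by
  obtain ⟨r, hRr, hrt⟩ := ENNReal.lt_iff_exists_nnreal_btwn.mp h
  refine ⟨NNReal.sqrt r, ?_, ?_⟩
  · rwa [← ENNReal.pow_lt_pow_left_iff two_ne_zero, ← ENNReal.coe_pow, NNReal.sq_sqrt]
  · rw [← NNReal.coe_pow, NNReal.sq_sqrt]
    exact ENNReal.coe_lt_ofReal.mp hrt

theorem IsCompact.exists_lt_forall_norm_delta_le {K : Set ℂ} (hK : IsCompact K)
    (hne : K.Nonempty) {w : ℂ} {R : ℝ≥0∞} (h : ∀ z ∈ K, ENNReal.ofReal ‖Delta w z‖ < R ^ 2) :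
    ∃ ρ : ℝ≥0, 0 < ρ ∧ (ρ : ℝ≥0∞) < R ∧ ∀ z ∈ K, ‖Delta w z‖ ≤ ρ ^ 2 := by
  obtain ⟨z₀, hz₀, hmax⟩ := hK.exists_isMaxOn hne (f := fun z => ‖Delta w z‖)
    (by unfold Delta; fun_prop)
  obtain ⟨ρ, hρ, hρR, hlt⟩ := exists_nnreal_lt_and_lt_sq (h z₀ hz₀)
  exact ⟨ρ, hρ, hρR, fun z hz => (hmax hz).trans hlt.le⟩

section

variable {w : ℂ} {a : ℕ → ℂ}

theorem exists_summable_bound_norm_sph_mul {S : Set ℂ} {ρ : ℝ≥0} {B : ℝ} (hρ : 0 < ρ)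
    (hρa : (ρ : ℝ≥0∞) < (ofScalars ℂ a).radius)
    (hΔ : ∀ z ∈ S, ‖Delta w z‖ ≤ ρ ^ 2) (hB : ∀ z ∈ S, ‖z - w‖ ≤ B) :
    ∃ M : ℕ → ℝ, Summable M ∧ ∀ n, ∀ z ∈ S, ‖Sph w n z * a n‖ ≤ M n := by
  refine ⟨fun n => max 1 (B / ρ) * (‖a n‖ * ρ ^ n), ?_, fun n z hz => ?_⟩
  · have := (ofScalars ℂ a).summable_norm_mul_pow hρa
    simp only [ofScalars_norm] at this
    exact this.mul_left _
  · calc ‖Sph w n z * a n‖ ≤ max 1 (‖z - w‖ / ρ) * ρ ^ n * ‖a n‖ := by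
          rw [norm_mul]
          gcongr
          exact norm_sph_le (NNReal.coe_pos.mpr hρ) (hΔ z hz) n
      _ ≤ max 1 (B / ρ) * (‖a n‖ * ρ ^ n) := by
          rw [mul_comm (‖a n‖), ← mul_assoc]
          gcongr
          exact hB z hz

theorem not_tendsto_sph_mul_zero {z : ℂ} {ρ : ℝ≥0} (hρa : (ofScalars ℂ a).radius < ρ)
    (hΔ : (ρ : ℝ) ^ 2 < ‖Delta w z‖) : ¬ Tendsto (fun n => Sph w n z * a n) atTop (𝓝 0) := by
  intro h
  have hρ : 0 < (ρ : ℝ) := NNReal.coe_pos.mpr (ENNReal.coe_pos.mp (bot_le.trans_lt hρa))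
  have hzw : z ≠ w := by
    rintro rfl
    simp only [Delta, sub_self, zero_mul, norm_zero] at hΔ
    exact hΔ.not_ge (sq_nonneg _)
  set c := min 1 (‖z - w‖ / ρ)
  have hc : 0 < c := lt_min one_pos (div_pos (norm_pos_iff.mpr (sub_ne_zero.mpr hzw)) hρ)
  have hbound : ∀ n, ‖a n‖ * ρ ^ n ≤ c⁻¹ * ‖Sph w n z * a n‖ := fun n => by
    rw [le_inv_mul_iff₀ hc, norm_mul]
    calc c * (‖a n‖ * ρ ^ n) = c * ρ ^ n * ‖a n‖ := by ring
      _ ≤ ‖Sph w n z‖ * ‖a n‖ := by gcongr; exact le_norm_sph hρ hΔ.le n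
  refine hρa.not_ge ((ofScalars ℂ a).le_radius_of_isBigO ?_)
  simp only [ofScalars_norm]
  refine (Asymptotics.IsBigO.of_bound c⁻¹ (Eventually.of_forall fun n => ?_)).trans (h.isBigO_one ℝ)
  rw [Real.norm_of_nonneg (by positivity)]
  exact hbound n

end

theorem abel_spherical_general (w : ℂ) (a : ℕ → ℂ) (R : ENNReal)
    (hls : limsup (fun n : ℕ => (‖a n‖₊ : ENNReal) ^ ((n : ℝ)⁻¹)) atTop = R⁻¹) :
    (∀ K : Set ℂ, IsCompact K →
      (∀ z ∈ K, ENNReal.ofReal ‖Delta w z‖ < R ^ 2) →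
      (∀ z ∈ K, Summable fun n => ‖Sph w n z * a n‖) ∧
      ∃ g : ℂ → ℂ, TendstoUniformlyOn
        (fun N z => ∑ n ∈ range N, Sph w n z * a n) g atTop K) ∧
    (∀ z : ℂ, R ^ 2 < ENNReal.ofReal ‖Delta w z‖ →
      ¬ ∃ l : ℂ, Tendsto (fun N => ∑ n ∈ range N, Sph w n z * a n) atTop (nhds l)) := by
  have hrad : (ofScalars ℂ a).radius = R := radius_ofScalars_eq_of_limsup hls
  refine ⟨fun K hK hKR => ?_, fun z hz ⟨l, hl⟩ => ?_⟩
  · rcases K.eq_empty_or_nonempty with rfl | hne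
    · exact ⟨by simp, 0, tendstoUniformlyOn_empty⟩
    obtain ⟨ρ, hρ, hρR, hΔ⟩ := hK.exists_lt_forall_norm_delta_le hne hKR
    obtain ⟨B, hB⟩ := hK.exists_bound_of_continuousOn (f := fun z => z - w) (by fun_prop)
    obtain ⟨M, hM, hbound⟩ := exists_summable_bound_norm_sph_mul hρ (hrad ▸ hρR) hΔ hB
    exact ⟨fun z hz => hM.of_nonneg_of_le (fun _ => norm_nonneg _) (hbound · z hz), _,
      tendstoUniformlyOn_tsum_nat hM hbound⟩
  · obtain ⟨ρ, hRρ, hΔ⟩ := exists_nnreal_gt_and_sq_lt hz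
    exact not_tendsto_sph_mul_zero (hrad ▸ hRρ) hΔ (tendsto_zero_of_tendsto_sum_range hl)

/-- Abel theorem for spherical series: if `limsup ‖aₙ‖^{1/n} = 1/R` with
`R ∈ (0,∞]`, then `Σₙ S_{w,n}(z)·aₙ` converges absolutely and uniformly on
compact subsets of the Cassini ball `{z : |Δ_w(z)| < R²}` and diverges at
every `z` with `|Δ_w(z)| > R²`. -/
theorem abel_spherical (w : ℂ) (a : ℕ → ℂ) (R : ENNReal) (hR : 0 < R)
    (hls : limsup (fun n : ℕ => (‖a n‖₊ : ENNReal) ^ ((n : ℝ)⁻¹)) atTop = R⁻¹) :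
    (∀ K : Set ℂ, IsCompact K →
      (∀ z ∈ K, ENNReal.ofReal ‖Delta w z‖ < R ^ 2) →
      (∀ z ∈ K, Summable fun n => ‖Sph w n z * a n‖) ∧
      ∃ g : ℂ → ℂ, TendstoUniformlyOn
        (fun N z => ∑ n ∈ range N, Sph w n z * a n) g atTop K) ∧
    (∀ z : ℂ, R ^ 2 < ENNReal.ofReal ‖Delta w z‖ →
      ¬ ∃ l : ℂ, Tendsto (fun N => ∑ n ∈ range N, Sph w n z * a n) atTop (nhds l)) :=
  abel_spherical_general w a R hls
end

section
/- For every n ∈ ℕ and all w, z, ζ ∈ ℂ with ζ ∉ {w, conj(w), z}, the Cauchy kernel decomposes as 1/(ζ−z) = Σ_{k=0}^{n} S_{w,k}(z)/S_{w,k+1}(ζ) + (S_{w,n+1}(z)/S_{w,n+1}(ζ))·(1/(ζ−z)). -/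
open Finset

lemma Sph_succ (w : ℂ) (k : ℕ) (x : ℂ) :
    Sph w (k + 1) x = Sph w k x * (x - (if k % 2 = 0 then w else (starRingEnd ℂ) w)) := by
  rcases Nat.even_or_odd k with ⟨m, hm⟩ | ⟨m, hm⟩
  · subst hm
    simp only [Sph, Delta]
    have h1 : (m + m) / 2 = m := by omega
    have h2 : (m + m + 1) / 2 = m := by omega
    have h3 : (m + m) % 2 = 0 := by omega
    have h4 : (m + m + 1) % 2 = 1 := by omega
    rw [h1, h2, h3, h4]
    simp
  · subst hm
    simp only [Sph, Delta]
    have h1 : (2 * m + 1) / 2 = m := by omega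
    have h2 : (2 * m + 1 + 1) / 2 = m + 1 := by omega
    have h3 : (2 * m + 1) % 2 = 1 := by omega
    have h4 : (2 * m + 1 + 1) % 2 = 0 := by omega
    rw [h1, h2, h3, h4]
    simp [pow_succ]
    ring

lemma Sph_ne_zero (w ζ : ℂ) (h1 : ζ ≠ w) (h2 : ζ ≠ (starRingEnd ℂ) w) (k : ℕ) :
    Sph w k ζ ≠ 0 := by
  have hΔ : Delta w ζ ≠ 0 :=
    mul_ne_zero (sub_ne_zero.mpr h1) (sub_ne_zero.mpr h2)
  unfold Sph
  apply mul_ne_zero (pow_ne_zero _ hΔ)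
  split
  · exact sub_ne_zero.mpr h1
  · exact one_ne_zero

/-- Iterated Cauchy-kernel expansion: for `ζ ∉ {w, conj w, z}` and any `n`,
`1/(ζ−z) = Σ_{k=0}^{n} S_{w,k}(z)/S_{w,k+1}(ζ)
  + (S_{w,n+1}(z)/S_{w,n+1}(ζ))·(1/(ζ−z))`. -/
theorem cauchy_kernel_expansion (w z ζ : ℂ) (h1 : ζ ≠ w)
    (h2 : ζ ≠ (starRingEnd ℂ) w) (h3 : ζ ≠ z) (n : ℕ) :
    1 / (ζ - z)
      = (∑ k ∈ range (n + 1), Sph w k z / Sph w (k + 1) ζ)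
        + (Sph w (n + 1) z / Sph w (n + 1) ζ) * (1 / (ζ - z)) := by
  have hz : ζ - z ≠ 0 := sub_ne_zero.mpr h3
  induction n with
  | zero =>
      have h0 : Sph w 0 z = 1 := by simp [Sph]
      have hS1z : Sph w 1 z = z - w := by simp [Sph]
      have hS1 : Sph w 1 ζ = ζ - w := by simp [Sph]
      have hw : ζ - w ≠ 0 := sub_ne_zero.mpr h1
      rw [range_one, sum_singleton, h0, hS1z, hS1]
      have hw' : ζ - w ≠ 0 := hw
      field_simp
      ring
  | succ n ih =>
      rw [sum_range_succ]
      have hstep : Sph w (n + 1) z / Sph w (n + 1) ζ * (1 / (ζ - z))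
          = Sph w (n + 1) z / Sph w (n + 1 + 1) ζ
            + Sph w (n + 1 + 1) z / Sph w (n + 1 + 1) ζ * (1 / (ζ - z)) := by
        set c : ℂ := if (n + 1) % 2 = 0 then w else (starRingEnd ℂ) w with hc
        have hcne : ζ - c ≠ 0 := by
          rw [hc]; split
          · exact sub_ne_zero.mpr h1
          · exact sub_ne_zero.mpr h2
        have hSz := Sph_succ w (n + 1) z
        have hSζ := Sph_succ w (n + 1) ζ
        rw [← hc] at hSz hSζ
        rw [hSz, hSζ]
        have hne := Sph_ne_zero w ζ h1 h2 (n + 1)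
        field_simp
        ring
      rw [add_assoc, ← hstep]
      exact ih
end
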